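/- arXiv:1711.05812 — 6 statements merged into one kernel-verified Lean document; each statement's English description precedes it below -/
import Mathlib

section
/- Let $(x^*,y^*,z^*)$ be a KKT point of the constrained problem and let $\bar x\in\mathcal{X}$ satisfy, for every $y\in\mathbb{R}^p$ and every $z\ge 0$, $f_0(\bar x)-f_0(x^*)+y^\top(A\bar x-b)+\sum_{i=1}^m z_i f_i(\bar x)\le \alpha+c_1\|y\|^2+c_2\|z\|^2$ with $\alpha,c_1,c_2\ge 0$ independent of $y,z$. Then $-(\alpha+4c_1\|y^*\|^2+4c_2\|z^*\|^2)\le f_0(\bar x)-f_0(x^*)\le\alpha$ and $\|A\bar x-b\|+\|[f(\bar x)]_+\|\le \alpha+c_1(1+\|y^*\|)^2+c_2(1+\|z^*\|)^2$. -/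
open scoped RealInnerProductSpace

/-- Lemma 1 (pre-rate): bounds on objective error and feasibility violation. -/
theorem pre_rate_lemma {n p m : ℕ}
    (X : Set (EuclideanSpace ℝ (Fin n))) (hX : Convex ℝ X) (hXc : IsClosed X)
    (f0 : EuclideanSpace ℝ (Fin n) → ℝ) (f : Fin m → EuclideanSpace ℝ (Fin n) → ℝ)
    (hf0 : ConvexOn ℝ Set.univ f0) (hf : ∀ i, ConvexOn ℝ Set.univ (f i))
    (A : EuclideanSpace ℝ (Fin n) →L[ℝ] EuclideanSpace ℝ (Fin p))
    (b : EuclideanSpace ℝ (Fin p))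
    (xstar : EuclideanSpace ℝ (Fin n)) (ystar : EuclideanSpace ℝ (Fin p))
    (zstar : EuclideanSpace ℝ (Fin m))
    -- KKT conditions at (xstar, ystar, zstar)
    (g ν : EuclideanSpace ℝ (Fin n)) (gradf : Fin m → EuclideanSpace ℝ (Fin n))
    (hg : ∀ x, f0 xstar + ⟪g, x - xstar⟫ ≤ f0 x)
    (hν : ∀ x ∈ X, ⟪ν, x - xstar⟫ ≤ 0)
    (hgradf : ∀ i, ∀ x, f i xstar + ⟪gradf i, x - xstar⟫ ≤ f i x)
    (hstat : g + ν + (ContinuousLinearMap.adjoint A) ystar + ∑ i, zstar i • gradf i = 0)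
    (hfeas1 : A xstar = b) (hfeas2 : xstar ∈ X)
    (hzstar : ∀ i, 0 ≤ zstar i) (hfi : ∀ i, f i xstar ≤ 0)
    (hcomp : ∀ i, zstar i * f i xstar = 0)
    -- the point x̄ and the assumed bound
    (xbar : EuclideanSpace ℝ (Fin n)) (hxbar : xbar ∈ X)
    (α c1 c2 : ℝ) (hα : 0 ≤ α) (hc1 : 0 ≤ c1) (hc2 : 0 ≤ c2)
    (hcond : ∀ (y : EuclideanSpace ℝ (Fin p)) (z : EuclideanSpace ℝ (Fin m)),
      (∀ i, 0 ≤ z i) →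
      f0 xbar - f0 xstar + ⟪y, A xbar - b⟫ + ∑ i, z i * f i xbar ≤
        α + c1 * ‖y‖ ^ 2 + c2 * ‖z‖ ^ 2)
    -- componentwise positive part of f(x̄)
    (fplus : EuclideanSpace ℝ (Fin m)) (hfplus : ∀ i, fplus i = max (f i xbar) 0) :
    (-(α + 4 * c1 * ‖ystar‖ ^ 2 + 4 * c2 * ‖zstar‖ ^ 2) ≤ f0 xbar - f0 xstar ∧
      f0 xbar - f0 xstar ≤ α) ∧
    ‖A xbar - b‖ + ‖fplus‖ ≤ α + c1 * (1 + ‖ystar‖) ^ 2 + c2 * (1 + ‖zstar‖) ^ 2 := by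
  classical
  set r : EuclideanSpace ℝ (Fin p) := A xbar - b with hrdef
  -- Key Lagrangian lower bound at (xbar, ystar, zstar)
  have hAr : r = A (xbar - xstar) := by rw [hrdef, map_sub, hfeas1]
  have h2 : ⟪ystar, r⟫ = ⟪(ContinuousLinearMap.adjoint A) ystar, xbar - xstar⟫ := by
    rw [hAr, ContinuousLinearMap.adjoint_inner_left]
  have hsum : ⟪∑ i, zstar i • gradf i, xbar - xstar⟫ ≤ ∑ i, zstar i * f i xbar := by
    rw [sum_inner]
    apply Finset.sum_le_sum
    intro i _
    rw [real_inner_smul_left]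
    nlinarith [hzstar i, hgradf i xbar, hcomp i]
  have hneg : g + (ContinuousLinearMap.adjoint A) ystar + ∑ i, zstar i • gradf i = -ν := by
    rw [eq_neg_iff_add_eq_zero, ← hstat]; abel
  have hkey : 0 ≤ f0 xbar - f0 xstar + ⟪ystar, r⟫ + ∑ i, zstar i * f i xbar := by
    have h1 := hg xbar
    have h3 : ⟪g, xbar - xstar⟫ + ⟪(ContinuousLinearMap.adjoint A) ystar, xbar - xstar⟫
        + ⟪∑ i, zstar i • gradf i, xbar - xstar⟫ = -⟪ν, xbar - xstar⟫ := by
      rw [← inner_add_left, ← inner_add_left, hneg, inner_neg_left]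
    have h4 := hν xbar hxbar
    linarith [hsum, h2 ▸ h3]
  -- Upper bound: take y = 0, z = 0
  have hub : f0 xbar - f0 xstar ≤ α := by
    have h := hcond 0 0 (fun i => le_of_eq rfl)
    simpa using h
  -- Lower bound: take y = 2 • ystar, z = 2 • zstar
  have hlb : -(α + 4 * c1 * ‖ystar‖ ^ 2 + 4 * c2 * ‖zstar‖ ^ 2) ≤ f0 xbar - f0 xstar := by
    have hz2 : ∀ i, (0:ℝ) ≤ ((2:ℝ) • zstar) i := by
      intro i
      have : ((2:ℝ) • zstar) i = 2 * zstar i := rfl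
      rw [this]; linarith [hzstar i]
    have h := hcond ((2:ℝ) • ystar) ((2:ℝ) • zstar) hz2
    have hy2 : ⟪(2:ℝ) • ystar, r⟫ = 2 * ⟪ystar, r⟫ := real_inner_smul_left _ _ _
    have hs2 : ∑ i, ((2:ℝ) • zstar) i * f i xbar = 2 * ∑ i, zstar i * f i xbar := by
      rw [Finset.mul_sum]; apply Finset.sum_congr rfl; intro i _
      have h2z : ((2:ℝ) • zstar) i = 2 * zstar i := rfl
      rw [h2z]; ring
    have hny : ‖(2:ℝ) • ystar‖ ^ 2 = 4 * ‖ystar‖ ^ 2 := by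
      rw [norm_smul]; simp; ring
    have hnz : ‖(2:ℝ) • zstar‖ ^ 2 = 4 * ‖zstar‖ ^ 2 := by
      rw [norm_smul]; simp; ring
    rw [hy2, hs2, hny, hnz] at h
    linarith
  refine ⟨⟨hlb, hub⟩, ?_⟩
  -- Feasibility bound
  set u : EuclideanSpace ℝ (Fin p) := ‖r‖⁻¹ • r with hudef
  set e : EuclideanSpace ℝ (Fin m) := ‖fplus‖⁻¹ • fplus with hedef
  have hfplus_nonneg : ∀ i, 0 ≤ fplus i := fun i => (hfplus i) ▸ le_max_right _ _
  have hznn : ∀ i, 0 ≤ (zstar + e) i := by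
    intro i
    have he : e i = ‖fplus‖⁻¹ * fplus i := rfl
    have hadd : (zstar + e) i = zstar i + ‖fplus‖⁻¹ * fplus i := rfl
    rw [hadd]
    exact add_nonneg (hzstar i)
      (mul_nonneg (inv_nonneg.mpr (norm_nonneg fplus)) (hfplus_nonneg i))
  have hur : ⟪u, r⟫ = ‖r‖ := by
    rw [hudef, real_inner_smul_left, real_inner_self_eq_norm_sq]
    rcases eq_or_ne (‖r‖) 0 with h | h
    · simp [h]
    · field_simp
  have hfsq : ∑ i, fplus i * f i xbar = ‖fplus‖ ^ 2 := by
    have h1 : ⟪fplus, fplus⟫ = ∑ i, fplus i * fplus i := by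
      simp only [PiLp.inner_apply, RCLike.inner_apply, conj_trivial]
    have h2 : ∑ i, fplus i * f i xbar = ∑ i, fplus i * fplus i := by
      apply Finset.sum_congr rfl
      intro i _
      rcases le_or_gt (f i xbar) 0 with h | h
      · have : fplus i = 0 := by rw [hfplus i]; exact max_eq_right h
        simp [this]
      · have : fplus i = f i xbar := by rw [hfplus i]; exact max_eq_left h.le
        rw [this]
    rw [h2, ← h1, real_inner_self_eq_norm_sq]
  have hef : ∑ i, e i * f i xbar = ‖fplus‖ := by
    have : ∑ i, e i * f i xbar = ‖fplus‖⁻¹ * ∑ i, fplus i * f i xbar := by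
      rw [Finset.mul_sum]
      apply Finset.sum_congr rfl
      intro i _
      have he : e i = ‖fplus‖⁻¹ * fplus i := rfl
      rw [he]; ring
    rw [this, hfsq]
    rcases eq_or_ne (‖fplus‖) 0 with h | h
    · simp [h]
    · field_simp
  have h := hcond (ystar + u) (zstar + e) hznn
  have hsplit1 : ⟪ystar + u, r⟫ = ⟪ystar, r⟫ + ‖r‖ := by
    rw [inner_add_left, hur]
  have hsplit2 : ∑ i, (zstar + e) i * f i xbar
      = (∑ i, zstar i * f i xbar) + ‖fplus‖ := by
    rw [← hef, ← Finset.sum_add_distrib]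
    apply Finset.sum_congr rfl
    intro i _
    have : (zstar + e) i = zstar i + e i := rfl
    rw [this]; ring
  have hnu : ‖u‖ ≤ 1 := by
    rw [hudef, norm_smul, norm_inv, norm_norm]
    rcases eq_or_ne (‖r‖) 0 with h' | h'
    · simp [h']
    · rw [inv_mul_cancel₀ h']
  have hne : ‖e‖ ≤ 1 := by
    rw [hedef, norm_smul, norm_inv, norm_norm]
    rcases eq_or_ne (‖fplus‖) 0 with h' | h'
    · simp [h']
    · rw [inv_mul_cancel₀ h']
  have hy : ‖ystar + u‖ ≤ 1 + ‖ystar‖ := by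
    calc ‖ystar + u‖ ≤ ‖ystar‖ + ‖u‖ := norm_add_le _ _
    _ ≤ 1 + ‖ystar‖ := by linarith
  have hz : ‖zstar + e‖ ≤ 1 + ‖zstar‖ := by
    calc ‖zstar + e‖ ≤ ‖zstar‖ + ‖e‖ := norm_add_le _ _
    _ ≤ 1 + ‖zstar‖ := by linarith
  have hy2 : ‖ystar + u‖ ^ 2 ≤ (1 + ‖ystar‖) ^ 2 :=
    pow_le_pow_left₀ (norm_nonneg _) hy 2
  have hz2 : ‖zstar + e‖ ^ 2 ≤ (1 + ‖zstar‖) ^ 2 :=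
    pow_le_pow_left₀ (norm_nonneg _) hz 2
  rw [hsplit1, hsplit2] at h
  have : ‖r‖ + ‖fplus‖ ≤ α + c1 * ‖ystar + u‖ ^ 2 + c2 * ‖zstar + e‖ ^ 2 := by linarith
  calc ‖r‖ + ‖fplus‖ ≤ α + c1 * ‖ystar + u‖ ^ 2 + c2 * ‖zstar + e‖ ^ 2 := this
  _ ≤ α + c1 * (1 + ‖ystar‖) ^ 2 + c2 * (1 + ‖zstar‖) ^ 2 := by
    have := mul_le_mul_of_nonneg_left hy2 hc1
    have := mul_le_mul_of_nonneg_left hz2 hc2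
    linarith
end

section
/- Let $0<\rho_k\le\beta_k$, let $z^k\ge 0$ componentwise, and set $z_i^{k+1}=z_i^k+\rho_k\max(-z_i^k/\beta_k, f_i(x^{k+1}))$ for $i=1,\dots,m$. Then for any $z\ge 0$: $\sum_{i=1}^m([z_i^k+\beta_k f_i(x^{k+1})]_+-z_i)f_i(x^{k+1})-\sum_{i=1}^m(z_i^{k+1}-z_i)\max(-z_i^k/\beta_k, f_i(x^{k+1}))\ge\frac{\beta_k-\rho_k}{\rho_k^2}\|z^{k+1}-z^k\|^2$. -/
/-- Lemma on the z-update of inexact ALM. -/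
theorem z_update_inequality {m : ℕ} (β ρ : ℝ) (hρ : 0 < ρ) (hρβ : ρ ≤ β)
    (zk : Fin m → ℝ) (hzk : ∀ i, 0 ≤ zk i) (u : Fin m → ℝ)
    (z : Fin m → ℝ) (hz : ∀ i, 0 ≤ z i)
    (zk1 : Fin m → ℝ)
    (hzk1 : ∀ i, zk1 i = zk i + ρ * max (-(zk i) / β) (u i)) :
    (β - ρ) / ρ ^ 2 * ∑ i, (zk1 i - zk i) ^ 2 ≤
      (∑ i, (max (zk i + β * u i) 0 - z i) * u i)
        - ∑ i, (zk1 i - z i) * max (-(zk i) / β) (u i) := by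
  have hβ : 0 < β := lt_of_lt_of_le hρ hρβ
  have key : ∀ i, (β - ρ) / ρ ^ 2 * (zk1 i - zk i) ^ 2 ≤
      (max (zk i + β * u i) 0 - z i) * u i
        - (zk1 i - z i) * max (-(zk i) / β) (u i) := by
    intro i
    rcases le_total (u i) (-(zk i) / β) with h | h
    · rw [max_eq_left h, hzk1 i, max_eq_left h]
      have h0 : zk i + β * u i ≤ 0 := by
        have := mul_le_mul_of_nonneg_left h hβ.le
        rw [mul_div_cancel₀ _ hβ.ne'] at this
        linarith
      rw [max_eq_right h0]
      have hM : (β - ρ) / ρ ^ 2 * (zk i + ρ * (-(zk i) / β) - zk i) ^ 2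
          = (β - ρ) * (-(zk i) / β) ^ 2 := by
        field_simp; ring
      rw [hM]
      have h1 : u i + zk i / β ≤ 0 := by
        rw [neg_div] at h; linarith
      have hz' := hz i
      have hzk' := hzk i
      have ht : β * (zk i / β) = zk i := mul_div_cancel₀ _ hβ.ne'
      have hd : -zk i / β = -(zk i / β) := neg_div _ _
      rw [hd]
      nlinarith [mul_nonneg hz' (neg_nonneg.mpr h1), sq_nonneg (zk i / β)]
    · rw [max_eq_right h, hzk1 i, max_eq_right h]
      have h0 : 0 ≤ zk i + β * u i := by
        have := mul_le_mul_of_nonneg_left h hβ.le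
        rw [mul_div_cancel₀ _ hβ.ne'] at this
        linarith
      rw [max_eq_left h0]
      have hM : (β - ρ) / ρ ^ 2 * (zk i + ρ * u i - zk i) ^ 2
          = (β - ρ) * (u i) ^ 2 := by
        field_simp; ring
      rw [hM]; nlinarith [sq_nonneg (u i)]
  rw [Finset.mul_sum, ← Finset.sum_sub_distrib]
  exact Finset.sum_le_sum fun i _ => key i
end

section
/- With $z^{k+1}_i=z_i^k+\rho_k\max(-z_i^k/\beta_k,f_i(x^{k+1}))$ and $\Psi_{\beta}(x,z)=\sum_{i=1}^m\psi_\beta(f_i(x),z_i)$, it holds that $\Psi_{\beta_k}(x^{k+1},z^k)-\sum_{i=1}^m[z_i^k+\beta_k f_i(x^{k+1})]_+ f_i(x^{k+1})=-\frac{\beta_k}{2\rho_k^2}\|z^{k+1}-z^k\|^2$. -/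
/-- The classical AL penalty function ψ_β(u,v). -/
noncomputable def psi (β u v : ℝ) : ℝ :=
  if 0 ≤ β * u + v then u * v + β / 2 * u ^ 2 else -(v ^ 2 / (2 * β))

/-- Identity \eqref{eq:ialm-ineq3}: Ψ_{β_k}(x^{k+1},z^k) - Σ[zᵢᵏ+β_k fᵢ]₊ fᵢ = -β_k/(2ρ_k²)‖z^{k+1}-z^k‖². -/
theorem Psi_identity {m : ℕ} (β ρ : ℝ) (hβ : 0 < β) (hρ : 0 < ρ)
    (zk : Fin m → ℝ) (hzk : ∀ i, 0 ≤ zk i) (u : Fin m → ℝ)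
    (zk1 : Fin m → ℝ)
    (hzk1 : ∀ i, zk1 i = zk i + ρ * max (-(zk i) / β) (u i)) :
    (∑ i, psi β (u i) (zk i)) - ∑ i, max (zk i + β * u i) 0 * u i =
      -(β / (2 * ρ ^ 2)) * ∑ i, (zk1 i - zk i) ^ 2 := by
  rw [Finset.mul_sum, ← Finset.sum_sub_distrib]
  refine Finset.sum_congr rfl fun i _ => ?_
  rw [hzk1 i]
  have hρ' : ρ ≠ 0 := hρ.ne'
  have hβ' : β ≠ 0 := hβ.ne'
  unfold psi
  rcases le_or_gt 0 (β * u i + zk i) with h | h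
  · rw [if_pos h]
    have h1 : max (-(zk i) / β) (u i) = u i := by
      rw [max_eq_right]
      rw [div_le_iff₀ hβ]
      linarith
    have h2 : max (zk i + β * u i) 0 = zk i + β * u i := by
      rw [max_eq_left]; linarith
    rw [h1, h2]
    field_simp
    ring
  · rw [if_neg (by linarith)]
    have h1 : max (-(zk i) / β) (u i) = -(zk i) / β := by
      rw [max_eq_left]
      rw [le_div_iff₀ hβ]
      nlinarith
    have h2 : max (zk i + β * u i) 0 = 0 := by
      rw [max_eq_right]; linarith
    rw [h1, h2]
    field_simp
    ring
end

section
/- Suppose each $f_i$ is differentiable on a set $S$ with $|f_i(x)|\le B_i$, $\|\nabla f_i(x)\|\le B_i$ on $S$, $\|\nabla f_i(\hat x)-\nabla f_i(\tilde x)\|\le L_i\|\hat x-\tilde x\|$, and $|f_i(\hat x)-f_i(\tilde x)|\le B_i\|\hat x-\tilde x\|$ for $\hat x,\tilde x\in S$. Fix $\beta>0$ and $z_i\in\mathbb{R}$, and let $h_i(x)=\psi_\beta(f_i(x),z_i)$. Then $\nabla h_i$ is Lipschitz on $S$ with constant $\beta B_i^2+L_i(\beta B_i+|z_i|)$. -/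
/-- Lipschitz continuity of ∇hᵢ where hᵢ(x) = ψ_β(fᵢ(x), zᵢ), with
    ∇hᵢ(x) = [β fᵢ(x) + zᵢ]₊ ∇fᵢ(x). -/
theorem grad_penalty_lipschitz {E : Type*} [NormedAddCommGroup E]
    [InnerProductSpace ℝ E] [CompleteSpace E]
    (S : Set E) (f : E → ℝ) (gradf : E → E) (B L β z : ℝ) (hβ : 0 < β)
    (hdiff : ∀ x ∈ S, HasGradientAt f (gradf x) x)
    (hfB : ∀ x ∈ S, |f x| ≤ B) (hgB : ∀ x ∈ S, ‖gradf x‖ ≤ B)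
    (hgL : ∀ x ∈ S, ∀ y ∈ S, ‖gradf x - gradf y‖ ≤ L * ‖x - y‖)
    (hfLip : ∀ x ∈ S, ∀ y ∈ S, |f x - f y| ≤ B * ‖x - y‖) :
    ∀ x ∈ S, ∀ y ∈ S,
      ‖max (β * f x + z) 0 • gradf x - max (β * f y + z) 0 • gradf y‖ ≤
        (β * B ^ 2 + L * (β * B + |z|)) * ‖x - y‖ := by
  intro x hx y hy
  set a := max (β * f x + z) 0 with ha
  set b := max (β * f y + z) 0 with hb
  have hB0 : 0 ≤ B := le_trans (abs_nonneg _) (hfB x hx)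
  have h1 : ‖gradf x - gradf y‖ ≤ L * ‖x - y‖ := hgL x hx y hy
  have hab : |a - b| ≤ β * (B * ‖x - y‖) := by
    have h2 : |a - b| ≤ |(β * f x + z) - (β * f y + z)| := abs_max_sub_max_le_abs _ _ _
    have h3 : |(β * f x + z) - (β * f y + z)| = β * |f x - f y| := by
      rw [show (β * f x + z) - (β * f y + z) = β * (f x - f y) by ring,
        abs_mul, abs_of_pos hβ]
    have h4 := hfLip x hx y hy
    rw [h3] at h2
    nlinarith
  have hbb : |b| ≤ β * B + |z| := by
    have h5 : |β * f y + z| ≤ β * B + |z| := by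
      have h6 := abs_add_le (β * f y) z
      have h7 : |β * f y| ≤ β * B := by
        rw [abs_mul, abs_of_pos hβ]
        nlinarith [hfB y hy]
      linarith
    rcases le_or_gt (β * f y + z) 0 with h | h
    · rw [hb, max_eq_right h]
      simp only [abs_zero]
      positivity
    · rw [hb, max_eq_left h.le]
      exact h5
  have key : a • gradf x - b • gradf y = (a - b) • gradf x + b • (gradf x - gradf y) := by
    simp [sub_smul, smul_sub]
  rw [key]
  have t1 : ‖(a - b) • gradf x‖ ≤ (β * (B * ‖x - y‖)) * B := by
    rw [norm_smul, Real.norm_eq_abs]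
    exact mul_le_mul hab (hgB x hx) (norm_nonneg _) (by positivity)
  have t2 : ‖b • (gradf x - gradf y)‖ ≤ (β * B + |z|) * (L * ‖x - y‖) := by
    rw [norm_smul, Real.norm_eq_abs]
    exact mul_le_mul hbb h1 (norm_nonneg _) (by positivity)
  calc ‖(a - b) • gradf x + b • (gradf x - gradf y)‖
      ≤ ‖(a - b) • gradf x‖ + ‖b • (gradf x - gradf y)‖ := norm_add_le _ _
    _ ≤ (β * (B * ‖x - y‖)) * B + (β * B + |z|) * (L * ‖x - y‖) := by linarith
    _ = (β * B ^ 2 + L * (β * B + |z|)) * ‖x - y‖ := by ring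
end

section
/- Suppose for each $k$ the inexact ALM iterates satisfy, for all $y$ and all $z\ge 0$, $\rho_k[f_0(x^{k+1})-f_0(x^*)+y^\top r^{k+1}+\sum_i z_i f_i(x^{k+1})]+\frac12\|y^{k+1}-y\|^2+\frac12\|z^{k+1}-z\|^2\le\frac12\|y^k-y\|^2+\frac12\|z^k-z\|^2+\rho_k\varepsilon_k$, where $r^{k+1}=Ax^{k+1}-b$. If $(x^*,y^*,z^*)$ is a KKT point and $y^0=0$, $z^0=0$, and $\sum_{k=0}^{K-1}\rho_k\varepsilon_k\le C_\varepsilon/2$, then $\|z^k\|\le\|y^*\|+2\|z^*\|+\sqrt{C_\varepsilon}$ for all $0\le k\le K$. -/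
open scoped RealInnerProductSpace

/-- Boundedness of the multipliers zᵏ in inexact ALM (Lemma on bd-z). -/
theorem multiplier_boundedness {n p m : ℕ} (K : ℕ)
    (X : Set (EuclideanSpace ℝ (Fin n)))
    (f0 : EuclideanSpace ℝ (Fin n) → ℝ) (f : Fin m → EuclideanSpace ℝ (Fin n) → ℝ)
    (A : EuclideanSpace ℝ (Fin n) →L[ℝ] EuclideanSpace ℝ (Fin p))
    (b : EuclideanSpace ℝ (Fin p))
    (x : ℕ → EuclideanSpace ℝ (Fin n))
    (y : ℕ → EuclideanSpace ℝ (Fin p)) (z : ℕ → EuclideanSpace ℝ (Fin m))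
    (ρ εk : ℕ → ℝ) (Cε : ℝ)
    (xstar : EuclideanSpace ℝ (Fin n)) (ystar : EuclideanSpace ℝ (Fin p))
    (zstar : EuclideanSpace ℝ (Fin m))
    -- KKT conditions at (xstar, ystar, zstar)
    (g ν : EuclideanSpace ℝ (Fin n)) (gradf : Fin m → EuclideanSpace ℝ (Fin n))
    (hg : ∀ w, f0 xstar + ⟪g, w - xstar⟫ ≤ f0 w)
    (hν : ∀ w ∈ X, ⟪ν, w - xstar⟫ ≤ 0)
    (hgradf : ∀ i, ∀ w, f i xstar + ⟪gradf i, w - xstar⟫ ≤ f i w)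
    (hstat : g + ν + (ContinuousLinearMap.adjoint A) ystar + ∑ i, zstar i • gradf i = 0)
    (hfeas1 : A xstar = b) (hfeas2 : xstar ∈ X)
    (hzstar : ∀ i, 0 ≤ zstar i) (hfi : ∀ i, f i xstar ≤ 0)
    (hcomp : ∀ i, zstar i * f i xstar = 0)
    -- algorithm data
    (hρ : ∀ k, 0 < ρ k) (hεk : ∀ k, 0 ≤ εk k)
    (hxX : ∀ k, x (k + 1) ∈ X)
    (hiter : ∀ k < K, ∀ (y' : EuclideanSpace ℝ (Fin p)) (z' : EuclideanSpace ℝ (Fin m)),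
      (∀ i, 0 ≤ z' i) →
      ρ k * (f0 (x (k + 1)) - f0 xstar + ⟪y', A (x (k + 1)) - b⟫
          + ∑ i, z' i * f i (x (k + 1)))
        + 1 / 2 * ‖y (k + 1) - y'‖ ^ 2 + 1 / 2 * ‖z (k + 1) - z'‖ ^ 2
      ≤ 1 / 2 * ‖y k - y'‖ ^ 2 + 1 / 2 * ‖z k - z'‖ ^ 2 + ρ k * εk k)
    (hy0 : y 0 = 0) (hz0 : z 0 = 0)
    (hsum : ∑ k ∈ Finset.range K, ρ k * εk k ≤ Cε / 2) :
    ∀ k ≤ K, ‖z k‖ ≤ ‖ystar‖ + 2 * ‖zstar‖ + Real.sqrt Cε := by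
  -- Key KKT inequality: for w ∈ X,
  -- 0 ≤ f0 w - f0 xstar + ⟪ystar, A w - b⟫ + ∑ i, zstar i * f i w
  have key : ∀ w ∈ X,
      0 ≤ f0 w - f0 xstar + ⟪ystar, A w - b⟫ + ∑ i, zstar i * f i w := by
    intro w hw
    have h1 : ⟪g, w - xstar⟫ ≤ f0 w - f0 xstar := by linarith [hg w]
    have h2 : ∀ i, zstar i * ⟪gradf i, w - xstar⟫ ≤ zstar i * f i w := by
      intro i
      have := hgradf i w
      have h3 : zstar i * (f i xstar + ⟪gradf i, w - xstar⟫) ≤ zstar i * f i w :=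
        mul_le_mul_of_nonneg_left this (hzstar i)
      have := hcomp i
      nlinarith
    have hA : ⟪ystar, A w - b⟫ = ⟪(ContinuousLinearMap.adjoint A) ystar, w - xstar⟫ := by
      rw [ContinuousLinearMap.adjoint_inner_left, map_sub, hfeas1]
    have hsuminner : ⟪∑ i, zstar i • gradf i, w - xstar⟫
        = ∑ i, zstar i * ⟪gradf i, w - xstar⟫ := by
      rw [sum_inner]
      simp [real_inner_smul_left, Finset.mul_sum, mul_assoc]
    have hnu : ⟪ν, w - xstar⟫ ≤ 0 := hν w hw
    have hstat' : ⟪g + ν + (ContinuousLinearMap.adjoint A) ystar + ∑ i, zstar i • gradf i,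
        w - xstar⟫ = 0 := by rw [hstat]; simp
    rw [inner_add_left, inner_add_left, inner_add_left, hsuminner] at hstat'
    have hsum2 : ∑ i, zstar i * ⟪gradf i, w - xstar⟫ ≤ ∑ i, zstar i * f i w :=
      Finset.sum_le_sum fun i _ => h2 i
    rw [hA]
    linarith
  -- Telescoping: for all k ≤ K,
  have tele : ∀ k ≤ K, 1 / 2 * ‖y k - ystar‖ ^ 2 + 1 / 2 * ‖z k - zstar‖ ^ 2
      ≤ 1 / 2 * ‖ystar‖ ^ 2 + 1 / 2 * ‖zstar‖ ^ 2 + ∑ j ∈ Finset.range k, ρ j * εk j := by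
    intro k hk
    induction k with
    | zero => simp [hy0, hz0]
    | succ k ih =>
      have hkK : k < K := hk
      have ih' := ih (Nat.le_of_lt hkK)
      have hit := hiter k hkK ystar zstar hzstar
      have hkey := key (x (k + 1)) (hxX k)
      have hρk := (hρ k).le
      have hpos : 0 ≤ ρ k * (f0 (x (k + 1)) - f0 xstar + ⟪ystar, A (x (k + 1)) - b⟫
          + ∑ i, zstar i * f i (x (k + 1))) := mul_nonneg hρk (by linarith)
      rw [Finset.sum_range_succ]
      linarith
  intro k hk
  have h := tele k hk
  have hsum' : ∑ j ∈ Finset.range k, ρ j * εk j ≤ Cε / 2 := by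
    refine le_trans ?_ hsum
    exact Finset.sum_le_sum_of_subset_of_nonneg (Finset.range_subset_range.mpr hk)
      (fun j _ _ => mul_nonneg (hρ j).le (hεk j))
  have hCε : 0 ≤ Cε := by
    have : (0:ℝ) ≤ ∑ j ∈ Finset.range K, ρ j * εk j :=
      Finset.sum_nonneg fun j _ => mul_nonneg (hρ j).le (hεk j)
    linarith
  have hz2 : ‖z k - zstar‖ ^ 2 ≤ ‖ystar‖ ^ 2 + ‖zstar‖ ^ 2 + Cε := by
    have hy2 : 0 ≤ ‖y k - ystar‖ ^ 2 := sq_nonneg _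
    linarith
  have hb : ‖z k - zstar‖ ≤ ‖ystar‖ + ‖zstar‖ + Real.sqrt Cε := by
    have h1 : ‖z k - zstar‖ ^ 2 ≤ (‖ystar‖ + ‖zstar‖ + Real.sqrt Cε) ^ 2 := by
      have hsq : Real.sqrt Cε ^ 2 = Cε := Real.sq_sqrt hCε
      nlinarith [norm_nonneg ystar, norm_nonneg zstar, Real.sqrt_nonneg Cε]
    have h2 : 0 ≤ ‖ystar‖ + ‖zstar‖ + Real.sqrt Cε := by
      positivity
    have h3 := Real.sqrt_le_sqrt h1
    rwa [Real.sqrt_sq (norm_nonneg _), Real.sqrt_sq h2] at h3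
  have htri : ‖z k‖ - ‖zstar‖ ≤ ‖z k - zstar‖ := norm_sub_norm_le _ _
  linarith
end

section
/- Let $\rho_0,\dots,\rho_{K-1}>0$ and suppose for $(y,z)$ with $z\ge 0$ and each $0\le k<K$: $\rho_k\,\Phi_k(y,z)+\frac12\|y^{k+1}-y\|^2+\frac12\|z^{k+1}-z\|^2\le\frac12\|y^k-y\|^2+\frac12\|z^k-z\|^2+\rho_k\varepsilon_k$, where $\Phi_k(y,z)=f_0(x^{k+1})-f_0(x^*)+y^\top(Ax^{k+1}-b)+\sum_i z_i f_i(x^{k+1})$. Then with $\bar x^K=\sum_{k=0}^{K-1}\rho_k x^{k+1}/\sum_{k=0}^{K-1}\rho_k$, $y^0=z^0=0$, and $f_i$ convex: $f_0(\bar x^K)-f_0(x^*)+y^\top(A\bar x^K-b)+\sum_i z_i f_i(\bar x^K)\le\frac{1}{\sum_{t}\rho_t}\big(\frac12\|y\|^2+\frac12\|z\|^2+\sum_k\rho_k\varepsilon_k\big)$. -/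
open scoped RealInnerProductSpace

/-- Ergodic bound for inexact ALM obtained by summing the per-iteration
    inequalities and applying Jensen's inequality. -/
theorem ergodic_bound {E : Type*} [NormedAddCommGroup E] [InnerProductSpace ℝ E]
    {p m : ℕ} (K : ℕ) (hK : 0 < K)
    (f0 : E → ℝ) (f : Fin m → E → ℝ)
    (hf0 : ConvexOn ℝ Set.univ f0) (hf : ∀ i, ConvexOn ℝ Set.univ (f i))
    (A : E →L[ℝ] EuclideanSpace ℝ (Fin p)) (b : EuclideanSpace ℝ (Fin p))
    (x : ℕ → E) (xstar : E)
    (y : ℕ → EuclideanSpace ℝ (Fin p)) (z : ℕ → EuclideanSpace ℝ (Fin m))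
    (ρ εk : ℕ → ℝ) (hρ : ∀ k, 0 < ρ k)
    (y' : EuclideanSpace ℝ (Fin p)) (z' : EuclideanSpace ℝ (Fin m))
    (hz' : ∀ i, 0 ≤ z' i)
    (hy0 : y 0 = 0) (hz0 : z 0 = 0)
    (hiter : ∀ k < K,
      ρ k * (f0 (x (k + 1)) - f0 xstar + ⟪y', A (x (k + 1)) - b⟫
          + ∑ i, z' i * f i (x (k + 1)))
        + 1 / 2 * ‖y (k + 1) - y'‖ ^ 2 + 1 / 2 * ‖z (k + 1) - z'‖ ^ 2
      ≤ 1 / 2 * ‖y k - y'‖ ^ 2 + 1 / 2 * ‖z k - z'‖ ^ 2 + ρ k * εk k)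
    (xbar : E)
    (hxbar : xbar = (∑ k ∈ Finset.range K, ρ k)⁻¹ •
        ∑ k ∈ Finset.range K, ρ k • x (k + 1)) :
    f0 xbar - f0 xstar + ⟪y', A xbar - b⟫ + ∑ i, z' i * f i xbar ≤
      (∑ k ∈ Finset.range K, ρ k)⁻¹ *
        (1 / 2 * ‖y'‖ ^ 2 + 1 / 2 * ‖z'‖ ^ 2 + ∑ k ∈ Finset.range K, ρ k * εk k) := by
  classical
  set S := ∑ k ∈ Finset.range K, ρ k with hSdef
  have hSpos : 0 < S := Finset.sum_pos (fun k _ => hρ k) (Finset.nonempty_range_iff.mpr hK.ne')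
  set Φ : ℕ → ℝ := fun k => f0 (x (k + 1)) - f0 xstar + ⟪y', A (x (k + 1)) - b⟫
      + ∑ i, z' i * f i (x (k + 1)) with hΦ
  set B : ℕ → ℝ := fun k => 1 / 2 * ‖y k - y'‖ ^ 2 + 1 / 2 * ‖z k - z'‖ ^ 2 with hB
  -- telescoping sum
  have key : ∑ k ∈ Finset.range K, ρ k * Φ k ≤
      1 / 2 * ‖y'‖ ^ 2 + 1 / 2 * ‖z'‖ ^ 2 + ∑ k ∈ Finset.range K, ρ k * εk k := by
    have h1 : ∑ k ∈ Finset.range K, ρ k * Φ k ≤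
        ∑ k ∈ Finset.range K, ((B k - B (k + 1)) + ρ k * εk k) := by
      refine Finset.sum_le_sum fun k hk => ?_
      have := hiter k (Finset.mem_range.mp hk)
      simp only [hΦ, hB]
      linarith
    rw [Finset.sum_add_distrib, Finset.sum_range_sub'] at h1
    have hBK : 0 ≤ B K := by positivity
    have hB0 : B 0 = 1 / 2 * ‖y'‖ ^ 2 + 1 / 2 * ‖z'‖ ^ 2 := by
      simp [hB, hy0, hz0]
    refine h1.trans ?_
    exact add_le_add (by rw [hB0]; exact sub_le_self _ hBK) le_rfl
  -- weights
  set w : ℕ → ℝ := fun k => S⁻¹ * ρ k with hw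
  have hw0 : ∀ k ∈ Finset.range K, 0 ≤ w k := fun k _ =>
    mul_nonneg (inv_nonneg.mpr hSpos.le) (hρ k).le
  have hw1 : ∑ k ∈ Finset.range K, w k = 1 := by
    simp only [hw, ← Finset.mul_sum, ← hSdef]
    field_simp
  have hxbar' : xbar = ∑ k ∈ Finset.range K, w k • x (k + 1) := by
    rw [hxbar, Finset.smul_sum]
    simp [hw, smul_smul]
  -- Jensen
  have hJ0 : f0 xbar ≤ ∑ k ∈ Finset.range K, w k * f0 (x (k + 1)) := by
    rw [hxbar']
    exact hf0.map_sum_le hw0 hw1 fun _ _ => Set.mem_univ _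
  have hJi : ∀ i, f i xbar ≤ ∑ k ∈ Finset.range K, w k * f i (x (k + 1)) := fun i => by
    rw [hxbar']
    exact (hf i).map_sum_le hw0 hw1 fun _ _ => Set.mem_univ _
  -- linear term
  have hlin : ⟪y', A xbar - b⟫ = ∑ k ∈ Finset.range K, w k * ⟪y', A (x (k + 1)) - b⟫ := by
    rw [hxbar', map_sum]
    simp only [inner_sub_right, mul_sub, Finset.sum_sub_distrib, inner_sum, map_smul,
      real_inner_smul_right, ← Finset.sum_mul, hw1, one_mul]
  -- combine
  have hcomb : f0 xbar - f0 xstar + ⟪y', A xbar - b⟫ + ∑ i, z' i * f i xbar ≤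
      ∑ k ∈ Finset.range K, w k * Φ k := by
    have hsum_i : ∑ i, z' i * f i xbar ≤
        ∑ k ∈ Finset.range K, w k * ∑ i, z' i * f i (x (k + 1)) := by
      have : ∑ i, z' i * f i xbar ≤ ∑ i, z' i * ∑ k ∈ Finset.range K, w k * f i (x (k + 1)) :=
        Finset.sum_le_sum fun i _ => mul_le_mul_of_nonneg_left (hJi i) (hz' i)
      refine this.trans (le_of_eq ?_)
      simp only [Finset.mul_sum]
      rw [Finset.sum_comm]
      exact Finset.sum_congr rfl fun k _ => Finset.sum_congr rfl fun i _ => by ring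
    have hconst : f0 xstar = ∑ k ∈ Finset.range K, w k * f0 xstar := by
      rw [← Finset.sum_mul, hw1, one_mul]
    calc f0 xbar - f0 xstar + ⟪y', A xbar - b⟫ + ∑ i, z' i * f i xbar
        ≤ (∑ k ∈ Finset.range K, w k * f0 (x (k + 1)))
          - (∑ k ∈ Finset.range K, w k * f0 xstar)
          + (∑ k ∈ Finset.range K, w k * ⟪y', A (x (k + 1)) - b⟫)
          + ∑ k ∈ Finset.range K, w k * ∑ i, z' i * f i (x (k + 1)) := by
          rw [hlin]; linarith [hconst]
      _ = ∑ k ∈ Finset.range K, w k * Φ k := by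
          simp only [hΦ, ← Finset.sum_sub_distrib, ← Finset.sum_add_distrib]
          exact Finset.sum_congr rfl fun k _ => by ring
  have heq : ∑ k ∈ Finset.range K, w k * Φ k = S⁻¹ * ∑ k ∈ Finset.range K, ρ k * Φ k := by
    rw [Finset.mul_sum]
    exact Finset.sum_congr rfl fun k _ => by rw [hw]; ring
  refine hcomb.trans ?_
  rw [heq]
  exact mul_le_mul_of_nonneg_left key (inv_nonneg.mpr hSpos.le)
end
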